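/- Let 0 < α < 1/2, let N be an even positive integer, h = 2π/(2N+1), and consider the α-perturbed nodes x̃_0 = 0; x̃_j = (j−α)h for −N ≤ j ≤ −1 with j even, x̃_j = (j+α)h for −N ≤ j ≤ −1 with j odd; x̃_j = (j−α)h for 1 ≤ j ≤ N with j odd, x̃_j = (j+α)h for 1 ≤ j ≤ N with j even. Let ℓ₀(x) = ∏_{j=−N, j≠0}^{N} sin((x − x̃_j)/2) / sin((x̃_0 − x̃_j)/2) be the trigonometric Lagrange basis polynomial at x̃_0. Then for every integer k with −N ≤ k ≤ N and k ≠ 0, ℓ₀(kh) ≤ 0 and |ℓ₀(kh)| ≥ sin(αh/2) / sin((|k| + α)h/2). -/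

import Mathlib

/-!
Write `θ = π / (2N + 1)` and `x̃_j = 2 β_j θ`. The nodes are symmetric, `β_{-j} = -β_j`, so pairing
`j` with `-j` and using `sin (a - b) sin (a + b) = sin² a - sin² b` gives
`ℓ₀(x) = ∏_{j=1}^N (sin² (β_j θ) - sin² (x/2)) / sin² (β_j θ)`, with every `β_j θ` in `(0, π/2)`.
At `x = 2mθ`, `1 ≤ m ≤ N`, the factor `j` is negative exactly when `β_j < m`, which happens for
`m - 1` or `m` indices, whichever is odd; hence `ℓ₀(2mθ) ≤ 0`.

For the bound, the numerator is `∏ |sin ((β_j - m) θ)| sin ((β_j + m) θ)`. The shifts `j ↦ j ± m`,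
the reflections `j ↦ m - j`, `j ↦ 2N + 1 - m - j` and `sin (π - y) = sin y` turn it into
`sin (α θ)` times products of `sin ((d ± α) θ)` with alternating signs again. Comparing with the
denominator `∏ sin² (β_j θ)` then reduces to `sin ((j - α) θ) ≤ sin ((j + α) θ)` and
`sin ((j - α) θ) sin ((j + 1 + α) θ) ≤ sin ((j + α) θ) sin ((j + 1 - α) θ)` for odd `j`, the latter
because the difference of the two sides is `sin θ sin (2 α θ)`.
-/

open Real Finset

/-- The α-perturbed nodes obtained by maximally perturbing the equally spaced grid in an
alternating fashion. -/
noncomputable def altNodes (N : ℕ) (α : ℝ) : ℤ → ℝ := fun j =>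
  if j = 0 then 0
  else if (Even j ∧ j < 0) ∨ (Odd j ∧ 0 < j) then ((j : ℝ) - α) * (2*π/(2*N+1))
  else ((j : ℝ) + α) * (2*π/(2*N+1))

/-- The trigonometric Lagrange basis polynomial at the node `x̃₀ = 0` of the alternating
perturbed grid. -/
noncomputable def ell0 (N : ℕ) (α : ℝ) (x : ℝ) : ℝ :=
  ∏ j ∈ (Finset.Icc (-(N:ℤ)) (N:ℤ)).erase 0,
    Real.sin ((x - altNodes N α j)/2) / Real.sin ((altNodes N α 0 - altNodes N α j)/2)

namespace Int

variable {M : Type*} [CommMonoid M]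

theorem prod_Ioc_consecutive (f : ℤ → M) {a b c : ℤ} (hab : a ≤ b) (hbc : b ≤ c) :
    (∏ j ∈ Ioc a b, f j) * ∏ j ∈ Ioc b c, f j = ∏ j ∈ Ioc a c, f j := by
  rw [← prod_union (disjoint_left.2 fun j hj hj' => by simp only [mem_Ioc] at hj hj'; omega),
    Ioc_union_Ioc_eq_Ioc hab hbc]

theorem prod_Ioc_add (f : ℤ → M) (a b c : ℤ) :
    ∏ j ∈ Ioc a b, f (j + c) = ∏ j ∈ Ioc (a + c) (b + c), f j := by
  rw [← image_add_right_Ioc, prod_image fun _ _ _ _ h => add_right_cancel h]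

theorem prod_Ioc_reflect (f : ℤ → M) (a b : ℤ) :
    ∏ j ∈ Ioc a b, f (a + b + 1 - j) = ∏ j ∈ Ioc a b, f j :=
  prod_nbij' (fun j => a + b + 1 - j) (fun j => a + b + 1 - j)
    (fun j hj => by simp only [mem_Ioc] at hj ⊢; omega)
    (fun j hj => by simp only [mem_Ioc] at hj ⊢; omega)
    (fun j _ => by ring) (fun j _ => by ring) (fun _ _ => rfl)

theorem prod_Icc_erase_zero (f : ℤ → M) (n : ℤ) :
    ∏ j ∈ (Icc (-n) n).erase 0, f j = ∏ j ∈ Ioc 0 n, f j * f (-j) := by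
  have hsplit : (Icc (-n) n).erase 0 = Ioc 0 n ∪ (Ioc 0 n).image Neg.neg := by
    ext j
    simp only [mem_erase, mem_Icc, mem_union, mem_Ioc, mem_image]
    constructor
    · rintro ⟨hj0, hj1, hj2⟩
      rcases hj0.lt_or_gt with hj | hj
      · exact Or.inr ⟨-j, ⟨by omega, by omega⟩, neg_neg j⟩
      · exact Or.inl ⟨hj, hj2⟩
    · rintro (⟨hj1, hj2⟩ | ⟨i, ⟨hi1, hi2⟩, rfl⟩) <;> omega
  rw [hsplit, prod_union, prod_image fun _ _ _ _ h => neg_injective h, prod_mul_distrib]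
  exact disjoint_left.2 fun j hj hj' => by
    obtain ⟨i, hi, rfl⟩ := mem_image.1 hj'
    simp only [mem_Ioc] at hj hi; omega

end Int

theorem Finset.prod_nonpos_of_odd_card {ι R : Type*} [CommRing R] [LinearOrder R]
    [IsStrictOrderedRing R] {s : Finset ι} {f : ι → R} (hs : Odd #s)
    (hf : ∀ i ∈ s, f i ≤ 0) : ∏ i ∈ s, f i ≤ 0 := by
  have h := prod_neg (s := s) fun i => -f i
  simp only [neg_neg, hs.neg_one_pow, neg_one_mul] at h
  rw [h, neg_nonpos]
  exact prod_nonneg fun i hi => neg_nonneg.2 (hf i hi)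

theorem Real.sin_sub_mul_sin_add (a b : ℝ) : sin (a - b) * sin (a + b) = sin a ^ 2 - sin b ^ 2 := by
  rw [sin_sub, sin_add]
  linear_combination sin a ^ 2 * sin_sq_add_cos_sq b - sin b ^ 2 * sin_sq_add_cos_sq a

theorem Real.sin_sub_mul_sin_add_le {a b x : ℝ} (hx0 : 0 ≤ x) (hx : x ≤ π / 2) (hab : a ≤ b)
    (hba : b - a ≤ π) : sin (a - x) * sin (b + x) ≤ sin (a + x) * sin (b - x) := by
  have h : sin (a + x) * sin (b - x) - sin (a - x) * sin (b + x) = sin (b - a) * sin (2 * x) := by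
    rw [sin_add, sin_sub, sin_sub, sin_add, sin_sub, sin_two_mul]; ring
  have := mul_nonneg (sin_nonneg_of_nonneg_of_le_pi (sub_nonneg.2 hab) hba)
    (sin_nonneg_of_nonneg_of_le_pi (x := 2 * x) (by linarith) (by linarith))
  linarith

section negOnePow

variable {R : Type*} [DivisionRing R]

theorem neg_one_zpow_eq_of_even_sub {a b : ℤ} (h : Even (a - b)) : (-1 : R) ^ a = (-1) ^ b := by
  rw [show a = (a - b) + b by ring, zpow_add₀ (neg_ne_zero.2 one_ne_zero), h.neg_one_zpow, one_mul]

theorem neg_one_zpow_eq_neg_of_odd_sub {a b : ℤ} (h : Odd (a - b)) :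
    (-1 : R) ^ a = -(-1) ^ b := by
  rw [show a = (a - b) + b by ring, zpow_add₀ (neg_ne_zero.2 one_ne_zero), h.neg_one_zpow,
    neg_one_mul]

end negOnePow

noncomputable def halfStep (N : ℕ) : ℝ := π / (2 * N + 1)

section halfStep

variable {N : ℕ}

theorem halfStep_pos : 0 < halfStep N := by unfold halfStep; positivity

theorem two_mul_add_one_mul_halfStep : (2 * N + 1) * halfStep N = π := by
  unfold halfStep; field_simp

theorem mul_halfStep_le_pi_div_two {x : ℝ} (hx : x ≤ N + 1 / 2) : x * halfStep N ≤ π / 2 := by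
  have := two_mul_add_one_mul_halfStep (N := N)
  nlinarith [halfStep_pos (N := N)]

theorem sin_mul_halfStep_pos {x : ℝ} (h0 : 0 < x) (h1 : x < 2 * N + 1) :
    0 < sin (x * halfStep N) := by
  have := two_mul_add_one_mul_halfStep (N := N)
  exact sin_pos_of_pos_of_lt_pi (mul_pos h0 halfStep_pos) (by nlinarith [halfStep_pos (N := N)])

theorem sin_mul_halfStep_le {x y : ℝ} (hx : -(N + 1 / 2) ≤ x) (hxy : x ≤ y) (hy : y ≤ N + 1 / 2) :
    sin (x * halfStep N) ≤ sin (y * halfStep N) := by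
  refine sin_le_sin_of_le_of_le_pi_div_two ?_ (mul_halfStep_le_pi_div_two hy)
    (mul_le_mul_of_nonneg_right hxy halfStep_pos.le)
  have := mul_halfStep_le_pi_div_two (N := N) (x := -x) (by linarith)
  linarith

theorem abs_sin_mul_halfStep {x : ℝ} (hx : |x| ≤ 2 * N + 1) :
    |sin (x * halfStep N)| = sin (|x| * halfStep N) := by
  have hπ := two_mul_add_one_mul_halfStep (N := N)
  have hsin : 0 ≤ sin (|x| * halfStep N) := sin_nonneg_of_nonneg_of_le_pi
    (mul_nonneg (abs_nonneg x) halfStep_pos.le) (by nlinarith [halfStep_pos (N := N)])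
  rcases abs_choice x with h | h <;> rw [h] at hsin ⊢
  · exact abs_of_nonneg hsin
  · rw [neg_mul, sin_neg] at hsin ⊢; exact abs_of_nonpos (by linarith)

theorem sin_two_mul_add_one_sub_mul_halfStep (y : ℝ) :
    sin ((2 * N + 1 - y) * halfStep N) = sin (y * halfStep N) := by
  rw [sub_mul, two_mul_add_one_mul_halfStep, sin_pi_sub]

end halfStep

/-- The node `x̃_d`, `d > 0`, is `2 * pertPoint α 0 d * halfStep N`; `pertPoint α 1` is the
opposite perturbation. -/
noncomputable def pertPoint (α : ℝ) (r d : ℤ) : ℝ := d + (-1 : ℝ) ^ (r + d) * α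

noncomputable def pertSin (N : ℕ) (α : ℝ) (r d : ℤ) : ℝ := sin (pertPoint α r d * halfStep N)

section pertPoint

variable {N : ℕ} {α : ℝ}

theorem pertPoint_of_even {r d : ℤ} (h : Even (r + d)) : pertPoint α r d = d + α := by
  rw [pertPoint, h.neg_one_zpow, one_mul]

theorem pertPoint_of_odd {r d : ℤ} (h : Odd (r + d)) : pertPoint α r d = d - α := by
  rw [pertPoint, h.neg_one_zpow, neg_one_mul, sub_eq_add_neg]

theorem pertPoint_mem_Icc (hα : 0 ≤ α) (r d : ℤ) : pertPoint α r d ∈ Set.Icc (d - α) (d + α) := by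
  rcases Int.even_or_odd (r + d) with h | h
  · rw [pertPoint_of_even h]; constructor <;> linarith
  · rw [pertPoint_of_odd h]; constructor <;> linarith

theorem pertPoint_congr {r r' : ℤ} (h : Even (r - r')) : pertPoint α r = pertPoint α r' := by
  ext d
  rw [pertPoint, pertPoint,
    neg_one_zpow_eq_of_even_sub (a := r + d) (b := r' + d) (by convert h using 1; ring)]

theorem pertPoint_self (m : ℤ) : pertPoint α m m = m + α := pertPoint_of_even ⟨m, rfl⟩

theorem pertPoint_add_sub (r d m : ℤ) : pertPoint α r (d + m) - m = pertPoint α (r + m) d := by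
  rw [pertPoint, pertPoint, add_assoc, add_comm d m]; push_cast; ring

theorem pertPoint_add (r j m : ℤ) : pertPoint α r j + m = pertPoint α (r + m) (j + m) := by
  rw [pertPoint, pertPoint,
    neg_one_zpow_eq_of_even_sub (a := r + m + (j + m)) (b := r + j) ⟨m, by ring⟩]
  push_cast; ring

theorem neg_pertPoint (r d : ℤ) : -pertPoint α r d = pertPoint α (r + 1) (-d) := by
  rw [pertPoint, pertPoint,
    neg_one_zpow_eq_neg_of_odd_sub (a := r + 1 + -d) (b := r + d) ⟨-d, by ring⟩]
  push_cast; ring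

theorem pertPoint_two_mul_add_one_sub (r n : ℤ) :
    pertPoint α r (2 * N + 1 - n) = 2 * N + 1 - pertPoint α r n := by
  rw [pertPoint, pertPoint,
    neg_one_zpow_eq_neg_of_odd_sub (a := r + (2 * N + 1 - n)) (b := r + n) ⟨N - n, by ring⟩]
  push_cast; ring

theorem pertSin_congr {r r' : ℤ} (h : Even (r - r')) : pertSin N α r = pertSin N α r' := by
  ext d; rw [pertSin, pertSin, pertPoint_congr h]

theorem pertSin_pos (hα0 : 0 ≤ α) (hα : α < 1 / 2) (r : ℤ) {d : ℤ} (h1 : 1 ≤ d) (hN : d ≤ N) :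
    0 < pertSin N α r d := by
  have h1' : (1 : ℝ) ≤ d := by exact_mod_cast h1
  have hN' : (d : ℝ) ≤ N := by exact_mod_cast hN
  have := pertPoint_mem_Icc hα0 r d
  exact sin_mul_halfStep_pos (by linarith [this.1]) (by linarith [this.2])

theorem prod_pertSin_pos (hα0 : 0 ≤ α) (hα : α < 1 / 2) (r : ℤ) {a b : ℤ} (ha : 0 ≤ a)
    (hb : b ≤ N) : 0 < ∏ j ∈ Ioc a b, pertSin N α r j :=
  prod_pos fun j hj => by
    simp only [mem_Ioc] at hj; exact pertSin_pos hα0 hα r (by omega) (by omega)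

end pertPoint

theorem altNodes_zero (N : ℕ) (α : ℝ) : altNodes N α 0 = 0 := if_pos rfl

theorem altNodes_of_pos (N : ℕ) (α : ℝ) {j : ℤ} (hj : 0 < j) :
    altNodes N α j = 2 * (pertPoint α 0 j * halfStep N) := by
  have h2 : (2 * π / (2 * N + 1) : ℝ) = 2 * halfStep N := by rw [halfStep]; ring
  rw [altNodes, if_neg hj.ne', h2]
  rcases Int.even_or_odd j with he | ho
  · rw [if_neg (by simp [he, Int.not_odd_iff_even.2 he]; omega),
      pertPoint_of_even (by rwa [zero_add])]
    ring
  · rw [if_pos (Or.inr ⟨ho, hj⟩), pertPoint_of_odd (by rwa [zero_add])]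
    ring

theorem altNodes_neg (N : ℕ) (α : ℝ) (j : ℤ) : altNodes N α (-j) = -altNodes N α j := by
  suffices h : ∀ j, 0 < j → altNodes N α (-j) = -altNodes N α j by
    rcases lt_trichotomy j 0 with hj | rfl | hj
    · rw [← neg_neg (altNodes N α (-j)), ← h (-j) (by omega), neg_neg]
    · simp [altNodes_zero]
    · exact h j hj
  intro j hj
  have h2 : (2 * π / (2 * N + 1) : ℝ) = 2 * halfStep N := by rw [halfStep]; ring
  rw [altNodes_of_pos N α hj, altNodes, if_neg (by omega), h2]
  rcases Int.even_or_odd j with he | ho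
  · rw [if_pos (Or.inl ⟨he.neg, by omega⟩), pertPoint_of_even (by rwa [zero_add])]
    push_cast; ring
  · rw [if_neg (by simp [Int.not_even_iff_odd.2 ho]; omega), pertPoint_of_odd (by rwa [zero_add])]
    push_cast; ring

theorem ell0_eq_prod (N : ℕ) (α x : ℝ) :
    ell0 N α x = ∏ j ∈ Ioc 0 (N : ℤ),
      (pertSin N α 0 j ^ 2 - sin (x / 2) ^ 2) / pertSin N α 0 j ^ 2 := by
  rw [ell0, Int.prod_Icc_erase_zero]
  refine prod_congr rfl fun j hj => ?_
  rw [altNodes_neg, altNodes_of_pos N α (mem_Ioc.1 hj).1, altNodes_zero, div_mul_div_comm,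
    pertSin]
  set y := pertPoint α 0 j * halfStep N
  rw [show (x - 2 * y) / 2 = x / 2 - y by ring, show (x - -(2 * y)) / 2 = x / 2 + y by ring,
    show (0 - 2 * y) / 2 = -y by ring, show (0 - -(2 * y)) / 2 = y by ring,
    sin_sub_mul_sin_add, sin_neg, neg_mul, div_neg, ← sq, ← neg_div, neg_sub]

section comparison

variable {N : ℕ} {α : ℝ}

theorem pertSin_zero_le_one (hα0 : 0 ≤ α) (hα : α < 1 / 2) {j : ℤ} (hj : Odd j) (h1 : 1 ≤ j)
    (hN : j ≤ N) : pertSin N α 0 j ≤ pertSin N α 1 j := by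
  have h1' : (1 : ℝ) ≤ j := by exact_mod_cast h1
  have hN' : (j : ℝ) ≤ N := by exact_mod_cast hN
  rw [pertSin, pertSin, pertPoint_of_odd (by rwa [zero_add]),
    pertPoint_of_even (by rw [add_comm]; exact hj.add_one)]
  exact sin_mul_halfStep_le (by linarith) (by linarith) (by linarith)

theorem pertSin_zero_mul_le_one (hα0 : 0 ≤ α) (hα : α < 1 / 2) {j : ℤ} (hj : Odd j)
    (hN : j + 1 ≤ N) :
    pertSin N α 0 j * pertSin N α 0 (j + 1) ≤ pertSin N α 1 j * pertSin N α 1 (j + 1) := by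
  have hN' : ((j + 1 : ℤ) : ℝ) ≤ N := by exact_mod_cast hN
  have hπ := two_mul_add_one_mul_halfStep (N := N)
  have hθ := halfStep_pos (N := N)
  have hodd : Odd (0 + j) := by rwa [zero_add]
  have heven : Even (0 + (j + 1)) := by rw [zero_add]; exact hj.add_one
  rw [pertSin, pertSin, pertSin, pertSin, pertPoint_of_odd hodd,
    pertPoint_of_even heven, pertPoint_of_even (by rw [add_comm]; exact hj.add_one),
    pertPoint_of_odd (by rw [add_comm, add_assoc, ← two_mul]; exact hj.add_even (even_two_mul _))]
  push_cast at hN' ⊢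
  simp only [sub_mul, add_mul]
  exact sin_sub_mul_sin_add_le (by positivity) (mul_halfStep_le_pi_div_two (by linarith))
    (by nlinarith) (by nlinarith)

theorem prod_pertSin_zero_le_one_of_even_length (hα0 : 0 ≤ α) (hα : α < 1 / 2) {c : ℤ}
    (hc : Even c) (hc0 : 0 ≤ c) (k : ℕ) (hk : c + 2 * k ≤ N) :
    ∏ j ∈ Ioc c (c + 2 * k), pertSin N α 0 j ≤ ∏ j ∈ Ioc c (c + 2 * k), pertSin N α 1 j := by
  induction k with
  | zero => simp
  | succ k ih =>
    have hIoc : Ioc c (c + 2 * (k + 1 : ℕ)) = insert (c + 2 * k + 1 + 1)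
        (insert (c + 2 * k + 1) (Ioc c (c + 2 * k))) := by
      rw [insert_Ioc_right_eq_Ioc_add_one (by omega), insert_Ioc_right_eq_Ioc_add_one (by omega)]
      push_cast; ring_nf
    have hodd : Odd (c + 2 * k + 1) := (hc.add (even_two_mul _)).add_one
    rw [hIoc, prod_insert (by simp), prod_insert (by simp), prod_insert (by simp),
      prod_insert (by simp), ← mul_assoc, ← mul_assoc, mul_comm (pertSin N α 0 _),
      mul_comm (pertSin N α 1 (c + 2 * k + 1 + 1))]
    push_cast at hk
    exact mul_le_mul (pertSin_zero_mul_le_one hα0 hα hodd (by omega)) (ih (by omega))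
      (prod_pertSin_pos hα0 hα 0 hc0 (by omega)).le
      (mul_pos (pertSin_pos hα0 hα 1 (by omega) (by omega))
        (pertSin_pos hα0 hα 1 (by omega) (by omega))).le

/-- For even `r` the two sides agree; for odd `r` the factors are compared in pairs `(j, j + 1)`
with `j` odd, hence the even starting point `c`. -/
theorem prod_pertSin_zero_le (hα0 : 0 ≤ α) (hα : α < 1 / 2) {r c b : ℤ} (hcr : Even c ∨ Even r)
    (hc0 : 0 ≤ c) (hcb : c ≤ b) (hbN : b ≤ N) :
    ∏ j ∈ Ioc c b, pertSin N α 0 j ≤ ∏ j ∈ Ioc c b, pertSin N α r j := by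
  rcases Int.even_or_odd r with hr | hr
  · rw [pertSin_congr (r := r) (r' := 0) (by rwa [sub_zero])]
  rw [pertSin_congr (r := r) (r' := 1) (hr.sub_odd odd_one)]
  have hc := hcr.resolve_right (Int.not_even_iff_odd.2 hr)
  obtain ⟨k, hk⟩ := Int.even_or_odd' (b - c)
  lift k to ℕ using (by omega)
  rcases hk with hk | hk
  · obtain rfl : b = c + 2 * k := by omega
    exact prod_pertSin_zero_le_one_of_even_length hα0 hα hc hc0 k (by omega)
  · obtain rfl : b = c + 2 * k + 1 := by omega
    rw [← insert_Ioc_right_eq_Ioc_add_one (by omega),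
      prod_insert (by simp), prod_insert (by simp)]
    exact mul_le_mul
      (pertSin_zero_le_one hα0 hα (hc.add (even_two_mul _)).add_one (by omega) (by omega))
      (prod_pertSin_zero_le_one_of_even_length hα0 hα hc hc0 k (by omega))
      (prod_pertSin_pos hα0 hα 0 hc0 (by omega)).le (pertSin_pos hα0 hα 1 (by omega) (by omega)).le

end comparison

section values

variable {N : ℕ} {α : ℝ}

theorem pertPoint_zero_le (hα0 : 0 ≤ α) (hα : α ≤ 1) {c j m : ℤ} (hc : Odd c) (hjc : j ≤ c)
    (hcm : c ≤ m) : pertPoint α 0 j ≤ m := by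
  rcases hjc.lt_or_eq with hjc | rfl
  · have : (j : ℝ) + 1 ≤ m := by exact_mod_cast (by omega : j + 1 ≤ m)
    linarith [(pertPoint_mem_Icc hα0 0 j).2]
  · rw [pertPoint_of_odd (by rwa [zero_add])]
    have : (j : ℝ) ≤ m := by exact_mod_cast hcm
    linarith

theorem le_pertPoint_zero (hα0 : 0 ≤ α) (hα : α ≤ 1) {c j m : ℤ} (hc : Odd c) (hcj : c < j)
    (hmc : m ≤ c + 1) : (m : ℝ) ≤ pertPoint α 0 j := by
  rcases (show c + 1 ≤ j by omega).lt_or_eq with hcj | rfl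
  · have : (m : ℝ) + 1 ≤ j := by exact_mod_cast (by omega : m + 1 ≤ j)
    linarith [(pertPoint_mem_Icc hα0 0 j).1]
  · rw [pertPoint_of_even (by rw [zero_add]; exact hc.add_one)]
    have : (m : ℝ) ≤ (c + 1 : ℤ) := by exact_mod_cast hmc
    linarith

theorem prod_pertSin_sq_sub_div_nonpos (hα0 : 0 ≤ α) (hα : α < 1 / 2) {m : ℤ} (hm1 : 1 ≤ m)
    (hmN : m ≤ N) :
    ∏ j ∈ Ioc 0 (N : ℤ), (pertSin N α 0 j ^ 2 - sin (m * halfStep N) ^ 2) / pertSin N α 0 j ^ 2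
      ≤ 0 := by
  obtain ⟨c, hc, hcm, hmc⟩ : ∃ c, Odd c ∧ c ≤ m ∧ m ≤ c + 1 := by
    rcases Int.even_or_odd m with ⟨k, hk⟩ | hm
    · exact ⟨m - 1, ⟨k - 1, by omega⟩, by omega, by omega⟩
    · exact ⟨m, hm, le_rfl, by omega⟩
  have hm1' : (1 : ℝ) ≤ m := by exact_mod_cast hm1
  have hmN' : (m : ℝ) ≤ N := by exact_mod_cast hmN
  have hsin_m : 0 ≤ sin (m * halfStep N) := (sin_mul_halfStep_pos (by linarith) (by linarith)).le
  have hneg : ∀ j ∈ Ioc 0 c,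
      (pertSin N α 0 j ^ 2 - sin (m * halfStep N) ^ 2) / pertSin N α 0 j ^ 2 ≤ 0 := by
    intro j hj
    simp only [mem_Ioc] at hj
    have hj1 : (1 : ℝ) ≤ j := by exact_mod_cast hj.1
    refine div_nonpos_of_nonpos_of_nonneg (sub_nonpos.2 (pow_le_pow_left₀
      (pertSin_pos hα0 hα 0 (by omega) (by omega)).le ?_ 2)) (sq_nonneg _)
    exact sin_mul_halfStep_le (by linarith [(pertPoint_mem_Icc hα0 0 j).1])
      (by exact_mod_cast pertPoint_zero_le hα0 (by linarith) hc hj.2 hcm) (by linarith)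
  have hpos : ∀ j ∈ Ioc c (N : ℤ),
      0 ≤ (pertSin N α 0 j ^ 2 - sin (m * halfStep N) ^ 2) / pertSin N α 0 j ^ 2 := by
    intro j hj
    simp only [mem_Ioc] at hj
    have hjN : (j : ℝ) ≤ N := by exact_mod_cast hj.2
    refine div_nonneg (sub_nonneg.2 (pow_le_pow_left₀ hsin_m ?_ 2)) (sq_nonneg _)
    exact sin_mul_halfStep_le (by linarith) (le_pertPoint_zero hα0 (by linarith) hc hj.1 hmc)
      (by linarith [(pertPoint_mem_Icc hα0 0 j).2])
  have hcard : Odd #(Ioc 0 c) := by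
    rwa [Int.card_Ioc, sub_zero, ← Int.odd_coe_nat, Int.toNat_of_nonneg (by omega)]
  rw [← Int.prod_Ioc_consecutive _ (by omega : (0 : ℤ) ≤ c) (by omega : c ≤ (N : ℤ))]
  exact mul_nonpos_of_nonpos_of_nonneg (prod_nonpos_of_odd_card hcard hneg) (prod_nonneg hpos)

theorem prod_abs_sin_pertPoint_sub (hα0 : 0 ≤ α) (hα : α < 1 / 2) {m : ℤ} (hm1 : 1 ≤ m)
    (hmN : m ≤ N) :
    ∏ j ∈ Ioc 0 (N : ℤ), |sin ((pertPoint α 0 j - m) * halfStep N)| =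
      (∏ d ∈ Ioc 0 (m - 1), pertSin N α (m + 1) d) * sin (α * halfStep N) *
        ∏ d ∈ Ioc 0 (N - m), pertSin N α m d := by
  rw [← Int.prod_Ioc_consecutive _ (by omega : 0 ≤ m - 1) (by omega : m - 1 ≤ N),
    ← Int.prod_Ioc_consecutive _ (by omega : m - 1 ≤ m) hmN, Ioc_sub_one_left_eq_Icc, Icc_self,
    prod_singleton, ← mul_assoc]
  refine congrArg₂ (· * ·) (congrArg₂ (· * ·) ?_ ?_) ?_
  · rw [← Int.prod_Ioc_reflect]
    refine prod_congr rfl fun d hd => ?_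
    simp only [mem_Ioc] at hd
    have hneg := neg_pertPoint (α := α) m (-d)
    rw [neg_neg] at hneg
    rw [show 0 + (m - 1) + 1 - d = -d + m by ring, pertPoint_add_sub, zero_add,
      neg_eq_iff_eq_neg.1 hneg, neg_mul, sin_neg, abs_neg]
    exact abs_of_pos (pertSin_pos hα0 hα (m + 1) (by omega) (by omega))
  · have h : |pertPoint α 0 m - m| = α := by
      rw [pertPoint, add_sub_cancel_left, abs_mul, abs_neg_one_zpow, one_mul, abs_of_nonneg hα0]
    rw [abs_sin_mul_halfStep (by rw [h]; linarith), h]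
  · rw [show Ioc m (N : ℤ) = Ioc (0 + m) (N - m + m) by simp, ← Int.prod_Ioc_add]
    refine prod_congr rfl fun d hd => ?_
    simp only [mem_Ioc] at hd
    rw [pertPoint_add_sub, zero_add]
    exact abs_of_pos (pertSin_pos hα0 hα m (by omega) (by omega))

theorem prod_sin_pertPoint_add (α : ℝ) {m : ℤ} (hm0 : 0 ≤ m) (hmN : m ≤ N) :
    ∏ j ∈ Ioc 0 (N : ℤ), sin ((pertPoint α 0 j + m) * halfStep N) =
      (∏ n ∈ Ioc m (N : ℤ), pertSin N α m n) * ∏ n ∈ Ioc (N - m) (N : ℤ), pertSin N α m n := by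
  have hshift := fun j => pertPoint_add (α := α) 0 j m
  simp only [zero_add] at hshift
  rw [← Int.prod_Ioc_consecutive _ (by omega : 0 ≤ N - m) (by omega : N - m ≤ N)]
  congr 1
  · rw [show Ioc m (N : ℤ) = Ioc (0 + m) (N - m + m) by simp, ← Int.prod_Ioc_add]
    exact prod_congr rfl fun j _ => by rw [hshift]; rfl
  · conv_rhs => rw [← Int.prod_Ioc_reflect]
    refine prod_congr rfl fun j _ => ?_
    rw [pertSin, show N - m + N + 1 - j = 2 * N + 1 - (j + m) by ring,
      pertPoint_two_mul_add_one_sub, ← hshift, sin_two_mul_add_one_sub_mul_halfStep]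

theorem div_le_abs_prod_pertSin_sq_sub_div (hα0 : 0 ≤ α) (hα : α < 1 / 2) {m : ℤ} (hm1 : 1 ≤ m)
    (hmN : m ≤ N) :
    sin (α * halfStep N) / sin ((m + α) * halfStep N) ≤
      |∏ j ∈ Ioc 0 (N : ℤ),
        (pertSin N α 0 j ^ 2 - sin (m * halfStep N) ^ 2) / pertSin N α 0 j ^ 2| := by
  have hm1' : (1 : ℝ) ≤ m := by exact_mod_cast hm1
  have hmN' : (m : ℝ) ≤ N := by exact_mod_cast hmN
  have hfactor : ∀ j ∈ Ioc 0 (N : ℤ),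
      |(pertSin N α 0 j ^ 2 - sin (m * halfStep N) ^ 2) / pertSin N α 0 j ^ 2| =
        |sin ((pertPoint α 0 j - m) * halfStep N)| * sin ((pertPoint α 0 j + m) * halfStep N) /
          pertSin N α 0 j ^ 2 := by
    intro j hj
    simp only [mem_Ioc] at hj
    have hj1 : (1 : ℝ) ≤ j := by exact_mod_cast hj.1
    have hjN : (j : ℝ) ≤ N := by exact_mod_cast hj.2
    have hb := pertPoint_mem_Icc hα0 0 j
    have hsum : 0 < sin ((pertPoint α 0 j + m) * halfStep N) :=
      sin_mul_halfStep_pos (by linarith [hb.1]) (by linarith [hb.2])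
    rw [abs_div, abs_sq, pertSin, ← sin_sub_mul_sin_add, abs_mul, ← sub_mul, ← add_mul,
      abs_of_pos hsum]
  have hmm : sin ((m + α) * halfStep N) = pertSin N α m m := by rw [pertSin, pertPoint_self]
  rw [abs_prod, prod_congr rfl hfactor, prod_div_distrib, prod_mul_distrib,
    prod_abs_sin_pertPoint_sub hα0 hα hm1 hmN, prod_sin_pertPoint_add α (by omega) hmN, hmm,
    div_le_div_iff₀ (pertSin_pos hα0 hα m hm1 hmN)
      (prod_pos fun j hj => pow_pos (pertSin_pos hα0 hα 0 (mem_Ioc.1 hj).1 (mem_Ioc.1 hj).2) 2)]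
  have h1 := prod_pertSin_zero_le (N := N) hα0 hα (r := m + 1) (Or.inl Even.zero) le_rfl
    (by omega : 0 ≤ m - 1) (by omega)
  have h2 := prod_pertSin_zero_le (N := N) hα0 hα (c := m - 1)
    ((Int.even_or_odd m).symm.imp (fun h => h.sub_odd odd_one) id) (by omega) (by omega) le_rfl
  have h3 := prod_pertSin_zero_le (N := N) hα0 hα (r := m) (Or.inl Even.zero) le_rfl
    (by omega : (0 : ℤ) ≤ N) le_rfl
  have hsa : 0 ≤ sin (α * halfStep N) := by
    have := mul_halfStep_le_pi_div_two (N := N) (x := α) (by linarith)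
    exact sin_nonneg_of_nonneg_of_le_pi (mul_nonneg hα0 halfStep_pos.le) (by linarith [pi_pos])
  have hpos : ∀ r a b : ℤ, 0 ≤ a → b ≤ N → 0 ≤ ∏ j ∈ Ioc a b, pertSin N α r j :=
    fun r a b ha hb => (prod_pertSin_pos hα0 hα r ha hb).le
  calc sin (α * halfStep N) * ∏ j ∈ Ioc 0 (N : ℤ), pertSin N α 0 j ^ 2
      = sin (α * halfStep N) * ((∏ j ∈ Ioc 0 (m - 1), pertSin N α 0 j) *
          (∏ j ∈ Ioc (m - 1) (N : ℤ), pertSin N α 0 j) * ∏ j ∈ Ioc 0 (N : ℤ), pertSin N α 0 j) := by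
        rw [prod_pow, sq, Int.prod_Ioc_consecutive _ (by omega) (by omega)]
    _ ≤ sin (α * halfStep N) * ((∏ j ∈ Ioc 0 (m - 1), pertSin N α (m + 1) j) *
          (∏ j ∈ Ioc (m - 1) (N : ℤ), pertSin N α m j) * ∏ j ∈ Ioc 0 (N : ℤ), pertSin N α m j) := by
        refine mul_le_mul_of_nonneg_left (mul_le_mul (mul_le_mul h1 h2 ?_ ?_) h3 ?_
          (mul_nonneg ?_ ?_)) hsa <;> exact hpos _ _ _ (by omega) (by omega)
    _ = _ := by
        rw [← Int.prod_Ioc_consecutive _ (by omega : m - 1 ≤ m) hmN,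
          ← Int.prod_Ioc_consecutive _ (by omega : 0 ≤ N - m) (by omega : N - m ≤ N),
          Ioc_sub_one_left_eq_Icc, Icc_self, prod_singleton]
        ring

end values

theorem ell0_sign_and_lower_bound_general (α : ℝ) (hα0 : 0 < α) (hα : α < 1/2)
    (N : ℕ)
    (k : ℤ) (hk : k ∈ Finset.Icc (-(N:ℤ)) (N:ℤ)) (hk0 : k ≠ 0) :
    ell0 N α ((k : ℝ) * (2*π/(2*N+1))) ≤ 0 ∧
    Real.sin (α * (2*π/(2*N+1)) / 2) /
        Real.sin ((|(k : ℝ)| + α) * (2*π/(2*N+1)) / 2) ≤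
      |ell0 N α ((k : ℝ) * (2*π/(2*N+1)))| := by
  have hm1 : 1 ≤ |k| := Int.one_le_abs hk0
  have hmN : |k| ≤ N := abs_le.2 (mem_Icc.1 hk)
  have hsq : sin ((k : ℝ) * (2 * π / (2 * N + 1)) / 2) ^ 2 = sin ((|k| : ℤ) * halfStep N) ^ 2 := by
    rw [show (k : ℝ) * (2 * π / (2 * N + 1)) / 2 = k * halfStep N by rw [halfStep]; ring]
    rcases abs_choice k with h | h <;> simp [h, sin_neg]
  have hα' : α * (2 * π / (2 * N + 1)) / 2 = α * halfStep N := by rw [halfStep]; ring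
  have hk' : (|(k : ℝ)| + α) * (2 * π / (2 * N + 1)) / 2 = ((|k| : ℤ) + α) * halfStep N := by
    rw [halfStep, Int.cast_abs]; ring
  rw [ell0_eq_prod, hsq, hα', hk']
  exact ⟨prod_pertSin_sq_sub_div_nonpos hα0.le hα hm1 hmN,
    div_le_abs_prod_pertSin_sq_sub_div hα0.le hα hm1 hmN⟩

/-- sign and lower bound for the values of the Lagrange polynomial `ℓ₀` of the
alternating maximally perturbed grid at the unperturbed grid points. -/
theorem ell0_sign_and_lower_bound (α : ℝ) (hα0 : 0 < α) (hα : α < 1/2)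
    (N : ℕ) (hN : 0 < N) (hNe : Even N)
    (k : ℤ) (hk : k ∈ Finset.Icc (-(N:ℤ)) (N:ℤ)) (hk0 : k ≠ 0) :
    ell0 N α ((k : ℝ) * (2*π/(2*N+1))) ≤ 0 ∧
    Real.sin (α * (2*π/(2*N+1)) / 2) /
        Real.sin ((|(k : ℝ)| + α) * (2*π/(2*N+1)) / 2) ≤
      |ell0 N α ((k : ℝ) * (2*π/(2*N+1)))| :=
  ell0_sign_and_lower_bound_general α hα0 hα N k hk hk0
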